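/- arXiv:1507.04549 — 4 statements merged into one kernel-verified Lean document; each statement's English description precedes it below -/
import Mathlib

section
/- Let g, γ ∈ W(ℝ^d) and a, b > 0. Define G_{a,b;n}(x) = ∑_{k∈ℤ^d} ḡ(x − n/b − ak) γ(x − ak) for n ∈ ℤ^d. Then ∑_{n∈ℤ^d} ‖G_{a,b;n}‖_∞ ≤ (1 + 1/a)^d (2 + 2b)^d ‖g‖_{W(ℝ^d)} ‖γ‖_{W(ℝ^d)}. -/
open MeasureTheory ENNReal

noncomputable section

/-- Coercion of a lattice point `k ∈ ℤ^d` to `ℝ^d`. -/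
def zVec {d : ℕ} (k : Fin d → ℤ) : Fin d → ℝ := fun i => (k i : ℝ)

/-- The unit cube `Q = [0,1)^d` translated by `k ∈ ℤ^d`. -/
def block (d : ℕ) (k : Fin d → ℤ) : Set (Fin d → ℝ) :=
  {x | ∀ i, (k i : ℝ) ≤ x i ∧ x i < (k i : ℝ) + 1}

/-- `‖f · T_k χ_Q‖_p`, the local `L^p` norm of `f` on the cube `k + Q`. -/
def blockNorm (d : ℕ) (p : ℝ≥0∞) (f : (Fin d → ℝ) → ℂ) (k : Fin d → ℤ) : ℝ≥0∞ :=
  eLpNorm ((block d k).indicator f) p volume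

/-- The Wiener space norm `‖f‖_{W(ℝ^d)} = ∑_{k∈ℤ^d} ‖f·T_k χ_Q‖_∞`. -/
def wienerNorm (d : ℕ) (f : (Fin d → ℝ) → ℂ) : ℝ≥0∞ :=
  ∑' k : Fin d → ℤ, blockNorm d ∞ f k

/-- The Wiener amalgam norm `‖f‖_{W(L^p,ℓ^q)} = (∑_{k∈ℤ^d} ‖f·T_k χ_Q‖_p^q)^{1/q}`,
with the supremum in place of the sum when `q = ∞`. -/
def amalgamNorm (d : ℕ) (p q : ℝ≥0∞) (f : (Fin d → ℝ) → ℂ) : ℝ≥0∞ :=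
  if q = ∞ then ⨆ k : Fin d → ℤ, blockNorm d p f k
  else (∑' k : Fin d → ℤ, blockNorm d p f k ^ q.toReal) ^ (1 / q.toReal)

/-- The function `G_{a,b;n}(x) = ∑_{k∈ℤ^d} ḡ(x − n/b − ak) γ(x − ak)`. -/
def Gabn {d : ℕ} (g γ : (Fin d → ℝ) → ℂ) (a b : ℝ) (n : Fin d → ℤ) (x : Fin d → ℝ) : ℂ :=
  ∑' k : Fin d → ℤ,
    (starRingEnd ℂ) (g (x - b⁻¹ • zVec n - a • zVec k)) * γ (x - a • zVec k)

/-!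
On the cube `m + Q` containing `x - ak`, `|γ|` is bounded by its local sup norm there, and likewise
for `g` on the cube `l + Q` containing `x - n/b - ak`; these two cubes are neighbours up to the
shift by `n/b`. For fixed `x` at most `(1 + 1/a)^d` values of `k` put `x - ak` into the same cube,
which bounds `‖G_{a,b;n}‖_∞` by `(1 + 1/a)^d` times a sum over neighbouring pairs `(m, l)`. For fixed
`(m, l)` at most `(2 + 2b)^d` values of `n` make them neighbours, so summing over `n` leaves
`(2 + 2b)^d ∑_{m,l} ‖γ·T_m χ_Q‖_∞ ‖g·T_l χ_Q‖_∞`, the product of the two Wiener norms.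
-/

open Set

namespace ENNReal

theorem tsum_tsum_ite_le_mul_tsum {α β : Type*} {R : α → β → Prop} [∀ k p, Decidable (R k p)]
    {N : ℝ≥0∞} (hR : ∀ p, {k | R k p}.encard ≤ N) (w : β → ℝ≥0∞) :
    ∑' k, ∑' p, (if R k p then w p else 0) ≤ N * ∑' p, w p := by
  rw [ENNReal.tsum_comm, ← ENNReal.tsum_mul_left]
  refine ENNReal.tsum_le_tsum fun p => ?_
  calc ∑' k, (if R k p then w p else 0) = ∑' _ : {k | R k p}, w p := by
        rw [tsum_subtype {k | R k p} fun _ => w p]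
        simp only [Set.indicator_apply, mem_ofPred_eq]
    _ = {k | R k p}.encard * w p := tsum_set_const _ _
    _ ≤ N * w p := by gcongr; exact_mod_cast hR p

theorem tsum_comp_le_mul_tsum {α β : Type*} {φ : α → β} {N : ℝ≥0∞}
    (hφ : ∀ p, {k | φ k = p}.encard ≤ N) (w : β → ℝ≥0∞) :
    ∑' k, w (φ k) ≤ N * ∑' p, w p := by
  classical
  calc ∑' k, w (φ k) = ∑' k, ∑' p, (if φ k = p then w p else 0) := by
        simp [eq_comm (a := φ _), tsum_ite_eq]
    _ ≤ N * ∑' p, w p := tsum_tsum_ite_le_mul_tsum hφ w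

end ENNReal

theorem encard_intCast_preimage_Ioc_le (α β : ℝ) :
    ((Int.cast : ℤ → ℝ) ⁻¹' Ioc α β).encard ≤ ENNReal.ofReal (β - α + 1) := by
  rw [Int.preimage_Ioc, ← Finset.coe_Ioc, encard_coe_eq_coe_finsetCard, Int.card_Ioc,
    ENat.toENNReal_coe, ← ENNReal.ofReal_natCast]
  refine ENNReal.ofReal_le_ofReal_iff'.2 ?_
  rcases le_total (⌊β⌋ - ⌊α⌋) 0 with h | h
  · exact Or.inr (by simp [Int.toNat_of_nonpos h])
  · have hβ := Int.floor_le β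
    have hα := Int.sub_one_lt_floor α
    have hcast : ((⌊β⌋ - ⌊α⌋).toNat : ℝ) = ((⌊β⌋ - ⌊α⌋ : ℤ) : ℝ) := by
      exact_mod_cast Int.toNat_of_nonneg h
    refine Or.inl ?_
    rw [hcast]
    push_cast
    linarith

theorem encard_int_box_le {d : ℕ} (α : Fin d → ℝ) {L : ℝ} (hL : 0 ≤ L) :
    {k : Fin d → ℤ | ∀ i, (k i : ℝ) ∈ Ioc (α i) (α i + L)}.encard
      ≤ ENNReal.ofReal ((L + 1) ^ d) := by
  have hpi : {k : Fin d → ℤ | ∀ i, (k i : ℝ) ∈ Ioc (α i) (α i + L)}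
      = univ.pi fun i => (Int.cast : ℤ → ℝ) ⁻¹' Ioc (α i) (α i + L) := by
    ext k; simp only [mem_ofPred_eq, mem_pi, mem_univ, true_implies, mem_preimage]
  rw [hpi, encard_pi_eq_prod_encard, ← ENat.toENNRealRingHom_apply, map_prod,
    ENNReal.ofReal_pow (by linarith)]
  calc ∏ i, ENat.toENNRealRingHom ((Int.cast : ℤ → ℝ) ⁻¹' Ioc (α i) (α i + L)).encard
      ≤ ∏ _i : Fin d, ENNReal.ofReal (L + 1) := Finset.prod_le_prod' fun i _ => by
        simpa using encard_intCast_preimage_Ioc_le (α i) (α i + L)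
    _ = ENNReal.ofReal (L + 1) ^ d := by simp

section Blocks

variable {d : ℕ}

def blockIndex (y : Fin d → ℝ) : Fin d → ℤ := fun i => ⌊y i⌋

theorem mem_block_blockIndex (y : Fin d → ℝ) : y ∈ block d (blockIndex y) :=
  fun _ => ⟨Int.floor_le _, Int.lt_floor_add_one _⟩

theorem ae_enorm_le_blockNorm_blockIndex (f : (Fin d → ℝ) → ℂ) :
    ∀ᵐ y, ‖f y‖ₑ ≤ blockNorm d ∞ f (blockIndex y) := by
  have h : ∀ᵐ y, ∀ m, ‖(block d m).indicator f y‖ₑ ≤ blockNorm d ∞ f m :=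
    ae_all_iff.2 fun m => by
      simpa only [blockNorm, eLpNorm_exponent_top] using ae_le_eLpNormEssSup
  filter_upwards [h] with y hy
  simpa [indicator_of_mem (mem_block_blockIndex y)] using hy (blockIndex y)

theorem ae_forall_enorm_sub_le_blockNorm {ι : Type*} [Countable ι] (f : (Fin d → ℝ) → ℂ)
    (v : ι → Fin d → ℝ) :
    ∀ᵐ x, ∀ k, ‖f (x - v k)‖ₑ ≤ blockNorm d ∞ f (blockIndex (x - v k)) :=
  ae_all_iff.2 fun k =>
    (measurePreserving_sub_right volume (v k)).quasiMeasurePreserving.ae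
      (ae_enorm_le_blockNorm_blockIndex f)

theorem encard_setOf_blockIndex_sub_smul_eq_le {a : ℝ} (ha : 0 < a) (x : Fin d → ℝ)
    (m : Fin d → ℤ) :
    {k : Fin d → ℤ | blockIndex (x - a • zVec k) = m}.encard
      ≤ ENNReal.ofReal ((1 + 1 / a) ^ d) := by
  have hbox := encard_int_box_le (fun i => (x i - m i - 1) / a) (by positivity : 0 ≤ 1 / a)
  rw [add_comm (1 / a)] at hbox
  refine (ENat.toENNReal_le.2 (encard_le_encard fun k hk i => ?_)).trans hbox
  have hki : ⌊x i - a * k i⌋ = m i := by simpa [blockIndex, zVec] using congrFun hk i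
  obtain ⟨h₁, h₂⟩ := Int.floor_eq_iff.1 hki
  constructor
  · rw [div_lt_iff₀ ha]; linarith
  · rw [← add_div, le_div_iff₀ ha]; linarith

/-- `l` is a neighbour of `m - n / b`: the cube `l + Q` meets `m - n / b + Q`. -/
def IsShiftNeighbor (b : ℝ) (n m l : Fin d → ℤ) : Prop :=
  ∀ i, |(l i : ℝ) - m i + b⁻¹ * n i| < 1

theorem isShiftNeighbor_blockIndex (b : ℝ) (n : Fin d → ℤ) (x v : Fin d → ℝ) :
    IsShiftNeighbor b n (blockIndex (x - v)) (blockIndex (x - b⁻¹ • zVec n - v)) := by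
  intro i
  simp only [blockIndex, zVec, Pi.sub_apply, Pi.smul_apply, smul_eq_mul]
  have := Int.floor_le (x i - v i)
  have := Int.sub_one_lt_floor (x i - v i)
  have := Int.floor_le (x i - b⁻¹ * n i - v i)
  have := Int.sub_one_lt_floor (x i - b⁻¹ * n i - v i)
  rw [abs_lt]; constructor <;> linarith

theorem encard_setOf_isShiftNeighbor_le {b : ℝ} (hb : 0 < b) (m l : Fin d → ℤ) :
    {n | IsShiftNeighbor b n m l}.encard ≤ ENNReal.ofReal ((2 + 2 * b) ^ d) := by
  have hbox := encard_int_box_le (fun i => b * (m i - l i - 1)) (by positivity : 0 ≤ 2 * b + 1)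
  rw [show 2 * b + 1 + 1 = 2 + 2 * b by ring] at hbox
  refine (ENat.toENNReal_le.2 (encard_le_encard fun n hn i => ?_)).trans hbox
  obtain ⟨h₁, h₂⟩ := abs_lt.1 (hn i)
  have hbn : b * (b⁻¹ * n i) = n i := by field_simp
  constructor
  · nlinarith
  · nlinarith

end Blocks

section Gabor

variable {d : ℕ} (g γ : (Fin d → ℝ) → ℂ) {a b : ℝ}

open scoped Classical in
/-- The bound for `|ḡ(y - n / b) γ(y)|` when `y ∈ m + Q` and `y - n / b ∈ l + Q`. -/
def neighborWeight (b : ℝ) (n : Fin d → ℤ) (p : (Fin d → ℤ) × (Fin d → ℤ)) : ℝ≥0∞ :=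
  if IsShiftNeighbor b n p.1 p.2 then blockNorm d ∞ γ p.1 * blockNorm d ∞ g p.2 else 0

theorem eLpNorm_Gabn_le (ha : 0 < a) (n : Fin d → ℤ) :
    eLpNorm (Gabn g γ a b n) ∞ volume
      ≤ ENNReal.ofReal ((1 + 1 / a) ^ d) * ∑' p, neighborWeight g γ b n p := by
  rw [eLpNorm_exponent_top]
  refine eLpNormEssSup_le_of_ae_enorm_bound ?_
  filter_upwards [ae_forall_enorm_sub_le_blockNorm γ fun k => a • zVec k,
    ae_forall_enorm_sub_le_blockNorm g fun k => b⁻¹ • zVec n + a • zVec k] with x hγx hgx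
  simp only [← sub_sub] at hgx
  calc ‖Gabn g γ a b n x‖ₑ
      ≤ ∑' k, ‖g (x - b⁻¹ • zVec n - a • zVec k)‖ₑ * ‖γ (x - a • zVec k)‖ₑ := by
        refine enorm_tsum_le_tsum_enorm.trans_eq (tsum_congr fun k => ?_)
        rw [enorm_mul, RCLike.enorm_conj]
    _ ≤ ∑' k, neighborWeight g γ b n
          (blockIndex (x - a • zVec k), blockIndex (x - b⁻¹ • zVec n - a • zVec k)) := by
        refine ENNReal.tsum_le_tsum fun k => ?_
        rw [neighborWeight, if_pos (isShiftNeighbor_blockIndex b n x _), mul_comm]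
        exact mul_le_mul' (hγx k) (hgx k)
    _ ≤ _ := ENNReal.tsum_comp_le_mul_tsum (fun p =>
        (ENat.toENNReal_le.2 (encard_le_encard fun k hk => congrArg Prod.fst hk)).trans
          (encard_setOf_blockIndex_sub_smul_eq_le ha x p.1)) _

theorem tsum_tsum_neighborWeight_le (hb : 0 < b) :
    ∑' n, ∑' p, neighborWeight g γ b n p
      ≤ ENNReal.ofReal ((2 + 2 * b) ^ d) * (wienerNorm d γ * wienerNorm d g) := by
  calc ∑' n, ∑' p, neighborWeight g γ b n p
      ≤ ENNReal.ofReal ((2 + 2 * b) ^ d) * ∑' p : (Fin d → ℤ) × (Fin d → ℤ),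
          blockNorm d ∞ γ p.1 * blockNorm d ∞ g p.2 := by
        classical
        unfold neighborWeight
        exact ENNReal.tsum_tsum_ite_le_mul_tsum
          (fun p : (Fin d → ℤ) × (Fin d → ℤ) => encard_setOf_isShiftNeighbor_le hb p.1 p.2) _
    _ = _ := by
        rw [ENNReal.tsum_prod (f := fun m l => blockNorm d ∞ γ m * blockNorm d ∞ g l),
          wienerNorm, wienerNorm, ← ENNReal.tsum_mul_right]
        simp only [ENNReal.tsum_mul_left]

end Gabor

theorem stmt6_general {d : ℕ} (g γ : (Fin d → ℝ) → ℂ)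
    (a b : ℝ) (ha : 0 < a) (hb : 0 < b) :
    ∑' n : Fin d → ℤ, eLpNorm (Gabn g γ a b n) ∞ volume
      ≤ ENNReal.ofReal ((1 + 1 / a) ^ d * (2 + 2 * b) ^ d)
          * wienerNorm d g * wienerNorm d γ := by
  calc ∑' n, eLpNorm (Gabn g γ a b n) ∞ volume
      ≤ ∑' n, ENNReal.ofReal ((1 + 1 / a) ^ d) * ∑' p, neighborWeight g γ b n p :=
        ENNReal.tsum_le_tsum fun n => eLpNorm_Gabn_le g γ ha n
    _ = ENNReal.ofReal ((1 + 1 / a) ^ d) * ∑' n, ∑' p, neighborWeight g γ b n p :=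
        ENNReal.tsum_mul_left
    _ ≤ ENNReal.ofReal ((1 + 1 / a) ^ d) *
          (ENNReal.ofReal ((2 + 2 * b) ^ d) * (wienerNorm d γ * wienerNorm d g)) := by
        gcongr
        exact tsum_tsum_neighborWeight_le g γ hb
    _ = _ := by
        rw [ENNReal.ofReal_mul (by positivity)]
        ring

theorem stmt6 {d : ℕ} (g γ : (Fin d → ℝ) → ℂ) (hg : Measurable g) (hγ : Measurable γ)
    (hWg : wienerNorm d g < ∞) (hWγ : wienerNorm d γ < ∞)
    (a b : ℝ) (ha : 0 < a) (hb : 0 < b) :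
    ∑' n : Fin d → ℤ, eLpNorm (Gabn g γ a b n) ∞ volume
      ≤ ENNReal.ofReal ((1 + 1 / a) ^ d * (2 + 2 * b) ^ d)
          * wienerNorm d g * wienerNorm d γ :=
  stmt6_general g γ a b ha hb
end
end

section
/- Suppose f ∈ W(ℝ^d) is locally Riemann integrable. Then lim_{a→0} sup_{y∈ℝ^d} |∑_{n∈ℤ^d} a^d f(y + na) − ∫_{ℝ^d} f(x) dx| = 0; i.e., the Riemann sums of f on the lattice aℤ^d + y converge to ∫ f uniformly in the offset y as a → 0. -/
open MeasureTheory ENNReal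

noncomputable section

/-!
On each cube of side `a` with corner at a point of `y + aℤ^d`, the Riemann sum term differs from
the integral of `f` over the cube by at most the integral of the oscillation of `f` over the ball of
radius `a` around the integration variable. Summing, the error is at most `∫ osc_a f`,
uniformly in `y`. The oscillation is lower semicontinuous, tends to `0` at every continuity point
of `f`, and for `a ≤ 1` is dominated by `osc_1 f`, which is integrable because a unit ball meets
at most `3^d` unit cubes and `f` is in the Wiener space; dominated convergence concludes.
-/

open Filter Function Topology Metric Set

section BallOscillation

variable {X E : Type*} [PseudoMetricSpace X] [PseudoEMetricSpace E]

def ballOsc (f : X → E) (r : ℝ) (x : X) : ℝ≥0∞ :=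
  ediam (f '' ball x r)

lemma edist_le_ballOsc {f : X → E} {r : ℝ} {x z w : X} (hz : z ∈ ball x r) (hw : w ∈ ball x r) :
    edist (f z) (f w) ≤ ballOsc f r x :=
  edist_le_ediam_of_mem (mem_image_of_mem f hz) (mem_image_of_mem f hw)

lemma ballOsc_mono (f : X → E) {r s : ℝ} (hrs : r ≤ s) (x : X) :
    ballOsc f r x ≤ ballOsc f s x :=
  ediam_mono (image_mono (ball_subset_ball hrs))

lemma lowerSemicontinuous_ballOsc (f : X → E) (r : ℝ) : LowerSemicontinuous (ballOsc f r) := by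
  intro x c hc
  obtain ⟨z, hz, w, hw, hc⟩ : ∃ z ∈ ball x r, ∃ w ∈ ball x r, c < edist (f z) (f w) := by
    by_contra! h
    exact hc.not_ge (ediam_image_le_iff.2 h)
  have hx : x ∈ ball z r ∩ ball w r := ⟨mem_ball_comm.1 hz, mem_ball_comm.1 hw⟩
  filter_upwards [(isOpen_ball.inter isOpen_ball).mem_nhds hx] with x' hx'
  exact hc.trans_le (edist_le_ballOsc (mem_ball_comm.1 hx'.1) (mem_ball_comm.1 hx'.2))

lemma tendsto_ballOsc_of_continuousAt {f : X → E} {x : X} (hf : ContinuousAt f x) :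
    Tendsto (fun r => ballOsc f r x) (𝓝[>] 0) (𝓝 0) := by
  refine ENNReal.tendsto_nhds_zero.2 fun ε hε => ?_
  obtain ⟨δ, hδ, hfδ⟩ := eventually_nhds_iff_ball.1
    (hf.eventually (eball_mem_nhds (f x) (ENNReal.half_pos hε.ne')))
  filter_upwards [Ioo_mem_nhdsGT hδ] with r hr
  calc ballOsc f r x ≤ ediam (eball (f x) (ε / 2)) :=
        ediam_mono (image_subset_iff.2 fun z hz => hfδ z (ball_subset_ball hr.2.le hz))
    _ ≤ 2 * (ε / 2) := ediam_eball_le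
    _ = ε := ENNReal.mul_div_cancel two_ne_zero ENNReal.ofNat_ne_top

lemma ballOsc_le_two_mul {F : Type*} [SeminormedAddCommGroup F] {f : X → F} {r : ℝ} {x : X}
    {M : ℝ≥0∞} (hM : ∀ z ∈ ball x r, ‖f z‖ₑ ≤ M) : ballOsc f r x ≤ 2 * M := by
  refine ediam_image_le_iff.2 fun z hz w hw => ?_
  calc edist (f z) (f w) = ‖f z - f w‖ₑ := edist_eq_enorm_sub _ _
    _ ≤ ‖f z‖ₑ + ‖f w‖ₑ := enorm_sub_le
    _ ≤ M + M := add_le_add (hM z hz) (hM w hw)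
    _ = 2 * M := (two_mul M).symm

end BallOscillation

section LatticeCube

variable {d : ℕ}

lemma add_smul_zVec_apply (y : Fin d → ℝ) (a : ℝ) (n : Fin d → ℤ) (i : Fin d) :
    (y + a • zVec n) i = y i + a * n i := rfl

def latticeCube (y : Fin d → ℝ) (a : ℝ) (n : Fin d → ℤ) : Set (Fin d → ℝ) :=
  univ.pi fun i => Ico (y i + a * n i) (y i + a * n i + a)

lemma measurableSet_latticeCube (y : Fin d → ℝ) (a : ℝ) (n : Fin d → ℤ) :
    MeasurableSet (latticeCube y a n) :=
  MeasurableSet.univ_pi fun _ => measurableSet_Ico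

lemma volume_latticeCube (y : Fin d → ℝ) {a : ℝ} (ha : 0 ≤ a) (n : Fin d → ℤ) :
    volume (latticeCube y a n) = ENNReal.ofReal (a ^ d) := by
  simp [latticeCube, volume_pi_pi, Real.volume_Ico, ENNReal.ofReal_pow ha]

lemma mem_latticeCube_iff_floor {y : Fin d → ℝ} {a : ℝ} (ha : 0 < a) {n : Fin d → ℤ}
    {x : Fin d → ℝ} : x ∈ latticeCube y a n ↔ ∀ i, ⌊(x i - y i) / a⌋ = n i := by
  simp only [latticeCube, mem_univ_pi]
  refine forall_congr' fun i => ?_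
  rw [Int.floor_eq_iff, le_div_iff₀ ha, div_lt_iff₀ ha, mem_Ico]
  constructor <;> rintro ⟨h₁, h₂⟩ <;> constructor <;> linarith

lemma iUnion_latticeCube (y : Fin d → ℝ) {a : ℝ} (ha : 0 < a) :
    ⋃ n, latticeCube y a n = univ :=
  eq_univ_of_forall fun x =>
    mem_iUnion.2 ⟨fun i => ⌊(x i - y i) / a⌋, (mem_latticeCube_iff_floor ha).2 fun _ => rfl⟩

lemma pairwise_disjoint_latticeCube (y : Fin d → ℝ) {a : ℝ} (ha : 0 < a) :
    Pairwise (Disjoint on latticeCube y a) := by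
  intro n m hnm
  refine disjoint_left.2 fun x hxn hxm => hnm (funext fun i => ?_)
  rw [mem_latticeCube_iff_floor ha] at hxn hxm
  rw [← hxn i, ← hxm i]

lemma lintegral_eq_tsum_latticeCube (y : Fin d → ℝ) {a : ℝ} (ha : 0 < a)
    (g : (Fin d → ℝ) → ℝ≥0∞) :
    ∫⁻ x, g x = ∑' n, ∫⁻ x in latticeCube y a n, g x := by
  rw [← setLIntegral_univ, ← iUnion_latticeCube y ha,
    lintegral_iUnion (measurableSet_latticeCube y a) (pairwise_disjoint_latticeCube y ha)]

lemma hasSum_integral_latticeCube {E : Type*} [NormedAddCommGroup E] [NormedSpace ℝ E]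
    {f : (Fin d → ℝ) → E} (hf : Integrable f) (y : Fin d → ℝ) {a : ℝ} (ha : 0 < a) :
    HasSum (fun n => ∫ x in latticeCube y a n, f x) (∫ x, f x) := by
  simpa only [iUnion_latticeCube y ha, setIntegral_univ] using
    hasSum_integral_iUnion (measurableSet_latticeCube y a) (pairwise_disjoint_latticeCube y ha)
      (by simpa only [iUnion_latticeCube y ha] using hf.integrableOn)

lemma dist_lt_of_mem_latticeCube {y : Fin d → ℝ} {a : ℝ} (ha : 0 < a) {n : Fin d → ℤ}
    {x : Fin d → ℝ} (hx : x ∈ latticeCube y a n) : dist (y + a • zVec n) x < a := by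
  refine (dist_pi_lt_iff ha).2 fun i => ?_
  obtain ⟨h₁, h₂⟩ := hx i (mem_univ i)
  rw [Real.dist_eq, add_smul_zVec_apply, abs_lt]
  constructor <;> linarith

lemma block_eq_latticeCube (k : Fin d → ℤ) : block d k = latticeCube 0 1 k := by
  ext x
  simp [block, latticeCube]

end LatticeCube

section RiemannSum

variable {d : ℕ} {E : Type*} [NormedAddCommGroup E] [NormedSpace ℝ E] [CompleteSpace E]
  {f : (Fin d → ℝ) → E} {y : Fin d → ℝ} {a : ℝ}

lemma setIntegral_latticeCube_const (y : Fin d → ℝ) (ha : 0 ≤ a) (n : Fin d → ℤ) (c : E) :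
    ∫ _ in latticeCube y a n, c = a ^ d • c := by
  rw [setIntegral_const, measureReal_def, volume_latticeCube y ha,
    ENNReal.toReal_ofReal (pow_nonneg ha d)]

lemma enorm_smul_sub_setIntegral_latticeCube_le (ha : 0 < a) {n : Fin d → ℤ}
    (hf : IntegrableOn f (latticeCube y a n)) :
    ‖a ^ d • f (y + a • zVec n) - ∫ x in latticeCube y a n, f x‖ₑ ≤
      ∫⁻ x in latticeCube y a n, ballOsc f a x := by
  have hc : IntegrableOn (fun _ => f (y + a • zVec n)) (latticeCube y a n) :=
    integrableOn_const (by rw [volume_latticeCube y ha.le]; exact ENNReal.ofReal_ne_top)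
  rw [← setIntegral_latticeCube_const y ha.le n, ← integral_sub hc hf]
  calc ‖∫ x in latticeCube y a n, (f (y + a • zVec n) - f x)‖ₑ
      ≤ ∫⁻ x in latticeCube y a n, ‖f (y + a • zVec n) - f x‖ₑ :=
        enorm_integral_le_lintegral_enorm _
    _ ≤ ∫⁻ x in latticeCube y a n, ballOsc f a x := by
        refine setLIntegral_mono' (measurableSet_latticeCube y a n) fun x hx => ?_
        rw [← edist_eq_enorm_sub]
        exact edist_le_ballOsc (dist_lt_of_mem_latticeCube ha hx) (mem_ball_self ha)

lemma enorm_tsum_smul_sub_integral_le (hf : Integrable f) (ha : 0 < a) (y : Fin d → ℝ) :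
    ‖(∑' n, a ^ d • f (y + a • zVec n)) - ∫ x, f x‖ₑ ≤ ∫⁻ x, ballOsc f a x := by
  set e : (Fin d → ℤ) → E :=
    fun n => a ^ d • f (y + a • zVec n) - ∫ x in latticeCube y a n, f x
  have he : ∑' n, ‖e n‖ₑ ≤ ∫⁻ x, ballOsc f a x := by
    rw [lintegral_eq_tsum_latticeCube y ha]
    exact ENNReal.tsum_le_tsum fun n => enorm_smul_sub_setIntegral_latticeCube_le ha hf.integrableOn
  rcases eq_top_or_lt_top (∫⁻ x, ballOsc f a x) with htop | hfin
  · simp [htop]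
  have hRiemann : HasSum (fun n => a ^ d • f (y + a • zVec n)) (∑' n, e n + ∫ x, f x) := by
    simpa [e] using (Summable.of_enorm (he.trans_lt hfin).ne).hasSum.add
      (hasSum_integral_latticeCube hf y ha)
  rw [hRiemann.tsum_eq, add_sub_cancel_right]
  exact enorm_tsum_le_tsum_enorm.trans he

end RiemannSum

section WienerSpace

variable {d : ℕ}

lemma volume_block (k : Fin d → ℤ) : volume (block d k) = 1 := by
  simp [block_eq_latticeCube, volume_latticeCube _ zero_le_one]

lemma lintegral_le_tsum_of_le_on_block {g : (Fin d → ℝ) → ℝ≥0∞} {c : (Fin d → ℤ) → ℝ≥0∞}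
    (h : ∀ k, ∀ x ∈ block d k, g x ≤ c k) : ∫⁻ x, g x ≤ ∑' k, c k := by
  rw [lintegral_eq_tsum_latticeCube 0 one_pos]
  refine ENNReal.tsum_le_tsum fun k => ?_
  rw [← block_eq_latticeCube]
  calc ∫⁻ x in block d k, g x ≤ ∫⁻ _ in block d k, c k :=
        setLIntegral_mono' (block_eq_latticeCube k ▸ measurableSet_latticeCube 0 1 k) (h k)
    _ = c k := by rw [setLIntegral_const, volume_block, mul_one]

lemma exists_mem_block_add_of_dist_lt {k : Fin d → ℤ} {x z : Fin d → ℝ} (hx : x ∈ block d k)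
    (hz : dist z x < 1) : ∃ j ∈ Finset.Icc (-1 : Fin d → ℤ) 1, z ∈ block d (k + j) := by
  have hzx : ∀ i, |z i - x i| < 1 := fun i => (dist_le_pi_dist z x i).trans_lt hz
  refine ⟨fun i => ⌊z i⌋ - k i, Finset.mem_Icc.2 ⟨fun i => ?_, fun i => ?_⟩, fun i => ?_⟩
  · have := Int.le_floor.2 (show ((k i - 1 : ℤ) : ℝ) ≤ z i by
      push_cast; linarith [(hx i).1, (abs_lt.1 (hzx i)).1])
    simp only [Pi.neg_apply, Pi.one_apply]
    omega
  · have := Int.floor_lt.2 (show z i < ((k i + 2 : ℤ) : ℝ) by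
      push_cast; linarith [(hx i).2, (abs_lt.1 (hzx i)).2])
    simp only [Pi.one_apply]
    omega
  · simp only [Pi.add_apply, add_sub_cancel]
    exact ⟨Int.floor_le (z i), Int.lt_floor_add_one (z i)⟩

variable {E : Type*}

lemma integrable_of_tsum_iSup_block_lt_top [NormedAddCommGroup E] {f : (Fin d → ℝ) → E}
    (hf : AEStronglyMeasurable f) (hW : ∑' k, ⨆ x ∈ block d k, ‖f x‖ₑ < ∞) : Integrable f :=
  ⟨hf, (lintegral_le_tsum_of_le_on_block fun _ x hx =>
    le_iSup₂ (f := fun z _ => ‖f z‖ₑ) x hx).trans_lt hW⟩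

lemma lintegral_ballOsc_one_lt_top [SeminormedAddCommGroup E] {f : (Fin d → ℝ) → E}
    (hW : ∑' k, ⨆ x ∈ block d k, ‖f x‖ₑ < ∞) : ∫⁻ x, ballOsc f 1 x < ∞ := by
  set W : (Fin d → ℤ) → ℝ≥0∞ := fun k => ⨆ x ∈ block d k, ‖f x‖ₑ
  have hosc : ∀ k, ∀ x ∈ block d k,
      ballOsc f 1 x ≤ 2 * ∑ j ∈ Finset.Icc (-1) 1, W (k + j) := by
    intro k x hx
    refine ballOsc_le_two_mul fun z hz => ?_
    obtain ⟨j, hj, hzj⟩ := exists_mem_block_add_of_dist_lt hx hz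
    exact (le_iSup₂ (f := fun z _ => ‖f z‖ₑ) z hzj).trans
      (Finset.single_le_sum (f := fun j => W (k + j)) (fun _ _ => zero_le) hj)
  calc ∫⁻ x, ballOsc f 1 x ≤ ∑' k, 2 * ∑ j ∈ Finset.Icc (-1) 1, W (k + j) :=
        lintegral_le_tsum_of_le_on_block hosc
    _ = 2 * ∑ _j ∈ Finset.Icc (-1 : Fin d → ℤ) 1, ∑' k, W k := by
        rw [ENNReal.tsum_mul_left, Summable.tsum_finsetSum fun _ _ => ENNReal.summable]
        have hshift (j : Fin d → ℤ) : ∑' k, W (k + j) = ∑' k, W k := (Equiv.addRight j).tsum_eq W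
        simp only [hshift]
    _ < ∞ := ENNReal.mul_lt_top ENNReal.ofNat_lt_top (ENNReal.sum_lt_top.2 fun _ _ => hW)

end WienerSpace

/-- Local Riemann integrability is encoded, via Lebesgue's criterion, as almost-everywhere
continuity; the Wiener norm is taken with pointwise rather than essential suprema. -/
theorem stmt10 {d : ℕ} (f : (Fin d → ℝ) → ℂ) (hm : Measurable f)
    (hW : ∑' k : Fin d → ℤ, (⨆ x ∈ block d k, (‖f x‖₊ : ℝ≥0∞)) < ∞)
    (hc : ∀ᵐ x : (Fin d → ℝ), ContinuousAt f x) :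
    Filter.Tendsto
      (fun a : ℝ => ⨆ y : Fin d → ℝ,
        (‖(∑' n : Fin d → ℤ, a ^ d • f (y + a • zVec n)) - ∫ x, f x‖₊ : ℝ≥0∞))
      (nhdsWithin 0 (Set.Ioi 0)) (nhds 0) := by
  have hf : Integrable f := integrable_of_tsum_iSup_block_lt_top hm.aestronglyMeasurable hW
  have hosc : Tendsto (fun a => ∫⁻ x, ballOsc f a x) (𝓝[>] 0) (𝓝 0) := by
    simpa using tendsto_lintegral_filter_of_dominated_convergence (ballOsc f 1)
      (Eventually.of_forall fun a => (lowerSemicontinuous_ballOsc f a).measurable)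
      (Eventually.mono (Ioo_mem_nhdsGT one_pos) fun a ha => ae_of_all _ (ballOsc_mono f ha.2.le))
      (lintegral_ballOsc_one_lt_top hW).ne (hc.mono fun x hx => tendsto_ballOsc_of_continuousAt hx)
  refine tendsto_of_tendsto_of_tendsto_of_le_of_le' tendsto_const_nhds hosc
    (Eventually.of_forall fun _ => zero_le) ?_
  filter_upwards [self_mem_nhdsWithin] with a ha
  exact iSup_le fun y => enorm_tsum_smul_sub_integral_le hf ha y
end
end

section
/- Let g, γ ∈ W(ℝ^d) with ⟨γ,g⟩ ≠ 0 and G_a(x) = (a^d/⟨γ,g⟩) ∑_{k∈ℤ^d} ḡ(x−ak) γ(x−ak). Assume lim_{a→0} ‖(G_a − 1)h‖_2 = 0 for all h ∈ L^2(ℝ^d). Then for every 1 ≤ p < ∞ and every f ∈ L^p(ℝ^d), lim_{a→0} ‖(G_a − 1)f‖_p = 0. -/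
open MeasureTheory ENNReal

noncomputable section

/-- `G_a(x) = (a^d/⟨γ,g⟩) ∑_{k∈ℤ^d} ḡ(x − ak) γ(x − ak)`. -/
def Ga {d : ℕ} (g γ : (Fin d → ℝ) → ℂ) (a : ℝ) (x : Fin d → ℝ) : ℂ :=
  ((a:ℂ) ^ d / ∫ t, γ t * (starRingEnd ℂ) (g t)) *
    ∑' k : Fin d → ℤ, (starRingEnd ℂ) (g (x - a • zVec k)) * γ (x - a • zVec k)

/-! The Wiener-space hypotheses make the multipliers `G_a - 1` uniformly bounded for
`0 < a ≤ 1`: for fixed `x`, at most `(⌊1/a⌋ + 1)^d` of the points `x - ak` lie in any given unit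
cube, so the series defining `G_a` is at most `(⌊1/a⌋ + 1)^d ‖g‖_W ‖γ‖_W`, and the prefactor
`a^d` absorbs that count. Given the uniform bound, it suffices by density to treat simple
functions `s`. Then `(G_a - 1) s` is uniformly bounded and supported in a fixed set of finite
measure, so its convergence to `0` in `L²` gives convergence in `L^p`: by Hölder's inequality
for `p ≤ 2`, and by `|u|^p ≤ ‖u‖_∞^(p-2) |u|²` for `p ≥ 2`. -/

open Filter Topology
open scoped NNReal

section
variable {α E : Type*} [MeasurableSpace α] {μ : Measure α} [NormedAddCommGroup E]

theorem eLpNorm_rpow_le_of_ae_enorm_le {f : α → E} {p q : ℝ≥0∞} {D : ℝ≥0}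
    (hq : q ≠ 0) (hqp : q ≤ p) (hp : p ≠ ∞) (hD : ∀ᵐ x ∂μ, ‖f x‖ₑ ≤ D) :
    eLpNorm f p μ ^ p.toReal ≤ (D : ℝ≥0∞) ^ (p.toReal - q.toReal) * eLpNorm f q μ ^ q.toReal := by
  have hq' : q ≠ ∞ := ne_top_of_le_ne_top hp hqp
  have hqp' : q.toReal ≤ p.toReal := ENNReal.toReal_mono hp hqp
  have hq0 : 0 < q.toReal := ENNReal.toReal_pos hq hq'
  have hDpow : (D : ℝ≥0∞) ^ (p.toReal - q.toReal) ≠ ∞ :=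
    ENNReal.rpow_ne_top_of_nonneg (sub_nonneg.2 hqp') coe_ne_top
  rw [eLpNorm_eq_lintegral_rpow_enorm_toReal (hq.bot_lt.trans_le hqp).ne' hp,
    eLpNorm_eq_lintegral_rpow_enorm_toReal hq hq', ← ENNReal.rpow_mul, ← ENNReal.rpow_mul,
    one_div_mul_cancel (hq0.trans_le hqp').ne', one_div_mul_cancel hq0.ne', ENNReal.rpow_one,
    ENNReal.rpow_one, ← lintegral_const_mul' _ _ hDpow]
  refine lintegral_mono_ae (hD.mono fun x hx => ?_)
  calc ‖f x‖ₑ ^ p.toReal = ‖f x‖ₑ ^ (p.toReal - q.toReal) * ‖f x‖ₑ ^ q.toReal := by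
        rw [← ENNReal.rpow_add_of_nonneg _ _ (sub_nonneg.2 hqp') hq0.le, sub_add_cancel]
    _ ≤ _ := by gcongr

variable {ι : Type*} {l : Filter ι} {u : ι → α → E} {p q : ℝ≥0∞}

theorem tendsto_eLpNorm_of_le_of_support_subset {T : Set α} (hT : μ T ≠ ∞)
    (hu : ∀ i, AEStronglyMeasurable (u i) μ) (hsupp : ∀ i, Function.support (u i) ⊆ T)
    (hpq : p ≤ q) (hlim : Tendsto (fun i => eLpNorm (u i) q μ) l (𝓝 0)) :
    Tendsto (fun i => eLpNorm (u i) p μ) l (𝓝 0) := by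
  rcases eq_or_ne p 0 with rfl | hp0
  · simpa using tendsto_const_nhds
  have he : 0 ≤ 1 / p.toReal - 1 / q.toReal := by
    rcases eq_or_ne q ∞ with rfl | hq
    · simp only [toReal_top, _root_.div_zero, sub_zero]
      positivity
    · exact sub_nonneg.2 (one_div_le_one_div_of_le
        (ENNReal.toReal_pos hp0 (ne_top_of_le_ne_top hq hpq)) (ENNReal.toReal_mono hq hpq))
  have hle : ∀ i, eLpNorm (u i) p μ ≤ eLpNorm (u i) q μ * μ T ^ (1 / p.toReal - 1 / q.toReal) := by
    intro i
    have hrestrict : ∀ r, eLpNorm (u i) r μ = eLpNorm (u i) r (μ.restrict T) := fun r =>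
      (eLpNorm_restrict_eq_of_support_subset (hsupp i)).symm
    rw [hrestrict, hrestrict, ← Measure.restrict_apply_univ]
    exact eLpNorm_le_eLpNorm_mul_rpow_measure_univ hpq (hu i).restrict
  have hK : μ T ^ (1 / p.toReal - 1 / q.toReal) ≠ ∞ :=
    ENNReal.rpow_ne_top_of_nonneg he hT
  refine tendsto_of_tendsto_of_tendsto_of_le_of_le tendsto_const_nhds ?_ (fun _ => zero_le) hle
  simpa using ENNReal.Tendsto.mul_const hlim (Or.inr hK)

theorem tendsto_eLpNorm_of_le_of_ae_enorm_le {D : ℝ≥0} (hD : ∀ᶠ i in l, ∀ᵐ x ∂μ, ‖u i x‖ₑ ≤ D)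
    (hq : q ≠ 0) (hqp : q ≤ p) (hp : p ≠ ∞) (hlim : Tendsto (fun i => eLpNorm (u i) q μ) l (𝓝 0)) :
    Tendsto (fun i => eLpNorm (u i) p μ) l (𝓝 0) := by
  have hp0 : 0 < p.toReal := ENNReal.toReal_pos (hq.bot_lt.trans_le hqp).ne' hp
  have hq0 : 0 < q.toReal := ENNReal.toReal_pos hq (ne_top_of_le_ne_top hp hqp)
  have hDpow : (D : ℝ≥0∞) ^ (p.toReal - q.toReal) ≠ ∞ :=
    ENNReal.rpow_ne_top_of_nonneg (sub_nonneg.2 (ENNReal.toReal_mono hp hqp)) coe_ne_top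
  have hrhs : Tendsto (fun i => (D : ℝ≥0∞) ^ (p.toReal - q.toReal) * eLpNorm (u i) q μ ^ q.toReal)
      l (𝓝 0) := by
    simpa [ENNReal.zero_rpow_of_pos hq0] using
      ENNReal.Tendsto.const_mul (hlim.ennrpow_const q.toReal) (Or.inr hDpow)
  have hpow : Tendsto (fun i => eLpNorm (u i) p μ ^ p.toReal) l (𝓝 0) :=
    tendsto_of_tendsto_of_tendsto_of_le_of_le' tendsto_const_nhds hrhs
      (.of_forall fun _ => zero_le)
      (hD.mono fun _ hi => eLpNorm_rpow_le_of_ae_enorm_le hq hqp hp hi)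
  simpa [ENNReal.rpow_rpow_inv hp0.ne', ENNReal.zero_rpow_of_pos (inv_pos.2 hp0)] using
    hpow.ennrpow_const p.toReal⁻¹

end

theorem ENNReal.tendsto_nhds_zero_of_forall_le_add {ι : Type*} {l : Filter ι} {F : ι → ℝ≥0∞}
    (h : ∀ ε > 0, ∃ G : ι → ℝ≥0∞, Tendsto G l (𝓝 0) ∧ ∀ᶠ i in l, F i ≤ G i + ε) :
    Tendsto F l (𝓝 0) := by
  rw [ENNReal.tendsto_nhds_zero]
  intro ε hε
  obtain ⟨G, hG, hFG⟩ := h (ε / 2) (ENNReal.half_pos hε.ne')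
  filter_upwards [hFG, ENNReal.tendsto_nhds_zero.1 hG (ε / 2) (ENNReal.half_pos hε.ne')]
    with i hFi hGi
  calc F i ≤ ε / 2 + ε / 2 := hFi.trans (by gcongr)
    _ = ε := ENNReal.add_halves ε

section
variable {α ι 𝕜 : Type*} [MeasurableSpace α] {μ : Measure α} {l : Filter ι} [RCLike 𝕜]
  {m : ι → α → 𝕜}

theorem tendsto_eLpNorm_mul_simpleFunc_of_tendsto_eLpNorm_two
    (hm : ∀ i, AEStronglyMeasurable (m i) μ) {C : ℝ≥0} (hC : ∀ᶠ i in l, ∀ᵐ x ∂μ, ‖m i x‖ₑ ≤ C)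
    (hL2 : ∀ h : α → 𝕜, Measurable h → eLpNorm h 2 μ < ∞ →
      Tendsto (fun i => eLpNorm (fun x => m i x * h x) 2 μ) l (𝓝 0))
    {p : ℝ≥0∞} (hp0 : p ≠ 0) (hp : p ≠ ∞) (s : SimpleFunc α 𝕜) (hs : MemLp s p μ) :
    Tendsto (fun i => eLpNorm (fun x => m i x * s x) p μ) l (𝓝 0) := by
  have hfin : s.FinMeasSupp μ := (SimpleFunc.memLp_iff_finMeasSupp hp0 hp).1 hs
  have hlim := hL2 s s.measurable
    ((SimpleFunc.memLp_iff_finMeasSupp two_ne_zero ofNat_ne_top).2 hfin).eLpNorm_lt_top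
  rcases le_total p 2 with hp2 | hp2
  · refine tendsto_eLpNorm_of_le_of_support_subset (SimpleFunc.finMeasSupp_iff_support.1 hfin).ne
      (fun i => (hm i).mul s.aestronglyMeasurable) (fun i => ?_) hp2 hlim
    exact Function.support_mul_subset_right _ _
  · obtain ⟨B, hB⟩ := s.exists_forall_norm_le
    refine tendsto_eLpNorm_of_le_of_ae_enorm_le (D := C * B.toNNReal) ?_ two_ne_zero hp2 hp hlim
    filter_upwards [hC] with i hi
    filter_upwards [hi] with x hx
    rw [enorm_mul, coe_mul]
    gcongr
    rw [← ofReal_norm, ENNReal.ofReal_le_iff_le_toReal coe_ne_top, coe_toReal]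
    exact (hB x).trans (Real.le_coe_toNNReal B)

theorem tendsto_eLpNorm_mul_of_tendsto_eLpNorm_two
    (hm : ∀ i, AEStronglyMeasurable (m i) μ) {C : ℝ≥0} (hC : ∀ᶠ i in l, ∀ᵐ x ∂μ, ‖m i x‖ₑ ≤ C)
    (hL2 : ∀ h : α → 𝕜, Measurable h → eLpNorm h 2 μ < ∞ →
      Tendsto (fun i => eLpNorm (fun x => m i x * h x) 2 μ) l (𝓝 0))
    {p : ℝ≥0∞} (hp1 : 1 ≤ p) (hp : p ≠ ∞) {f : α → 𝕜} (hf : MemLp f p μ) :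
    Tendsto (fun i => eLpNorm (fun x => m i x * f x) p μ) l (𝓝 0) := by
  refine ENNReal.tendsto_nhds_zero_of_forall_le_add fun ε hε => ?_
  -- `ε / C = ∞` when `C = 0`; harmless, as `C * (ε / C) ≤ ε` holds in `ℝ≥0∞` regardless.
  obtain ⟨s, hfs, hs⟩ := hf.exists_simpleFunc_eLpNorm_sub_lt hp
    (ENNReal.div_pos hε.ne' (coe_ne_top (r := C))).ne'
  refine ⟨_, tendsto_eLpNorm_mul_simpleFunc_of_tendsto_eLpNorm_two hm hC hL2
    (zero_lt_one.trans_le hp1).ne' hp s hs, ?_⟩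
  filter_upwards [hC] with i hi
  have hsplit : (fun x => m i x * f x) = (fun x => m i x * s x) + fun x => m i x * (f - s) x := by
    ext x; simp [mul_sub]
  calc eLpNorm (fun x => m i x * f x) p μ
      ≤ eLpNorm (fun x => m i x * s x) p μ + eLpNorm (fun x => m i x * (f - s) x) p μ := by
        rw [hsplit]
        exact eLpNorm_add_le ((hm i).mul s.aestronglyMeasurable)
          ((hm i).mul (hf.1.sub s.aestronglyMeasurable)) hp1
    _ ≤ eLpNorm (fun x => m i x * s x) p μ + C * eLpNorm (f - ⇑s) p μ := by
        gcongr
        refine eLpNorm_le_nnreal_smul_eLpNorm_of_ae_le_mul' ?_ p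
        filter_upwards [hi] with x hx
        rw [enorm_mul]
        gcongr
    _ ≤ eLpNorm (fun x => m i x * s x) p μ + ε := by
        gcongr
        exact le_trans (by gcongr) ENNReal.mul_div_le
end

theorem ENNReal.tsum_comp_le_mul_tsum_s11 {ι κ : Type*} (φ : ι → κ) (H : κ → ℝ≥0∞) {N : ℕ}
    (hφ : ∀ m, (φ ⁻¹' {m}).encard ≤ N) :
    ∑' k, H (φ k) ≤ N * ∑' m, H m := by
  rw [← ENNReal.tsum_fiberwise (fun k => H (φ k)) φ, ← ENNReal.tsum_mul_left]
  refine ENNReal.tsum_le_tsum fun m => ?_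
  have hfiber : ∑' k : φ ⁻¹' {m}, H (φ k) = ∑' _ : φ ⁻¹' {m}, H m :=
    tsum_congr fun k => by rw [k.2]
  rw [hfiber, ENNReal.tsum_const]
  gcongr
  exact_mod_cast hφ m

theorem Int.exists_finset_setOf_floor_sub_mul_eq {a : ℝ} (ha : 0 < a) (t : ℝ) (m : ℤ) :
    ∃ s : Finset ℤ, {j : ℤ | ⌊t - a * j⌋ = m} ⊆ s ∧ s.card ≤ ⌊1 / a⌋₊ + 1 := by
  refine ⟨Finset.Ioc ⌊(t - m - 1) / a⌋ ⌊(t - m) / a⌋, fun j hj => ?_, ?_⟩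
  · have hj : ⌊t - a * j⌋ = m := hj
    have hlow := Int.floor_le (t - a * j)
    have hup := Int.lt_floor_add_one (t - a * j)
    rw [hj] at hlow hup
    simp only [Finset.coe_Ioc, Set.mem_Ioc, Int.floor_lt, Int.le_floor, div_lt_iff₀ ha,
      le_div_iff₀ ha]
    constructor <;> nlinarith
  · have hsplit : (t - m) / a = (t - m - 1) / a + 1 / a := by field_simp; ring
    have h := Int.le_floor_add_floor ((t - m - 1) / a) (1 / a)
    rw [← hsplit] at h
    rw [Int.card_Ioc, Int.toNat_le, Nat.cast_add, Nat.cast_one,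
      Int.natCast_floor_eq_floor (by positivity)]
    omega

theorem encard_setOf_floor_sub_smul_zVec_eq_le {d : ℕ} {a : ℝ} (ha : 0 < a) (x : Fin d → ℝ)
    (m : Fin d → ℤ) :
    {k : Fin d → ℤ | (fun i => ⌊(x - a • zVec k) i⌋) = m}.encard ≤ ((⌊1 / a⌋₊ + 1) ^ d : ℕ) := by
  classical
  choose s hs hcard using fun i => Int.exists_finset_setOf_floor_sub_mul_eq ha (x i) (m i)
  calc _ ≤ (Fintype.piFinset s : Set (Fin d → ℤ)).encard := by
        refine Set.encard_le_encard fun k hk => ?_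
        rw [Finset.mem_coe, Fintype.mem_piFinset]
        intro i
        exact hs i (by simpa [zVec] using congrFun hk i)
    _ ≤ ((⌊1 / a⌋₊ + 1) ^ d : ℕ) := by
        rw [Set.encard_coe_eq_coe_finsetCard, Fintype.card_piFinset]
        exact_mod_cast (Finset.prod_le_prod' fun i _ => hcard i).trans_eq (by simp)

theorem ae_enorm_le_blockNorm_floor {d : ℕ} (F : (Fin d → ℝ) → ℂ) :
    ∀ᵐ y, ‖F y‖ₑ ≤ blockNorm d ∞ F (fun i => ⌊y i⌋) := by
  have hblock : ∀ᵐ y, ∀ k, ‖(block d k).indicator F y‖ₑ ≤ blockNorm d ∞ F k :=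
    ae_all_iff.2 fun k => by
      simpa [blockNorm, eLpNorm_exponent_top] using enorm_ae_le_eLpNormEssSup _ volume
  filter_upwards [hblock] with y hy
  have hy_mem : y ∈ block d (fun i => ⌊y i⌋) := fun i => ⟨Int.floor_le _, Int.lt_floor_add_one _⟩
  simpa [Set.indicator_of_mem hy_mem] using hy (fun i => ⌊y i⌋)

theorem ae_tsum_enorm_mul_le {d : ℕ} (g γ : (Fin d → ℝ) → ℂ) {a : ℝ} (ha : 0 < a) :
    ∀ᵐ x, ∑' k : Fin d → ℤ, ‖g (x - a • zVec k)‖ₑ * ‖γ (x - a • zVec k)‖ₑ ≤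
      ((⌊1 / a⌋₊ + 1) ^ d : ℕ) * (wienerNorm d g * wienerNorm d γ) := by
  have htranslate : ∀ F : (Fin d → ℝ) → ℂ, ∀ᵐ x, ∀ k : Fin d → ℤ,
      ‖F (x - a • zVec k)‖ₑ ≤ blockNorm d ∞ F (fun i => ⌊(x - a • zVec k) i⌋) := fun F =>
    ae_all_iff.2 fun k => (measurePreserving_sub_right volume (a • zVec k)).quasiMeasurePreserving
      |>.ae (ae_enorm_le_blockNorm_floor F)
  filter_upwards [htranslate g, htranslate γ] with x hg hγ
  calc ∑' k : Fin d → ℤ, ‖g (x - a • zVec k)‖ₑ * ‖γ (x - a • zVec k)‖ₑ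
      ≤ ∑' k : Fin d → ℤ, blockNorm d ∞ g (fun i => ⌊(x - a • zVec k) i⌋) * wienerNorm d γ :=
        ENNReal.tsum_le_tsum fun k => mul_le_mul' (hg k) ((hγ k).trans (ENNReal.le_tsum _))
    _ ≤ _ := by
        rw [ENNReal.tsum_mul_right, ← mul_assoc]
        gcongr
        exact ENNReal.tsum_comp_le_mul_tsum_s11 _ _ (encard_setOf_floor_sub_smul_zVec_eq_le ha x)

theorem pow_mul_floor_one_div_add_one_pow_le {a : ℝ} (ha : 0 < a) (ha1 : a ≤ 1) (d : ℕ) :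
    a ^ d * ((⌊1 / a⌋₊ + 1) ^ d : ℕ) ≤ 2 ^ d := by
  rw [Nat.cast_pow, ← mul_pow]
  gcongr
  have : (⌊1 / a⌋₊ : ℝ) ≤ 1 / a := Nat.floor_le (by positivity)
  calc a * ((⌊1 / a⌋₊ + 1 : ℕ) : ℝ) ≤ a * (1 / a + 1) := by push_cast; gcongr
    _ ≤ 2 := by rw [mul_add, mul_one_div_cancel ha.ne']; linarith

theorem ae_enorm_Ga_le {d : ℕ} (g γ : (Fin d → ℝ) → ℂ) {a : ℝ} (ha : 0 < a) (ha1 : a ≤ 1) :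
    ∀ᵐ x, ‖Ga g γ a x‖ₑ ≤
      ‖(2 : ℂ) ^ d / ∫ t, γ t * (starRingEnd ℂ) (g t)‖ₑ * (wienerNorm d g * wienerNorm d γ) := by
  set I := ∫ t, γ t * (starRingEnd ℂ) (g t)
  have hconst : ‖(a : ℂ) ^ d‖ₑ * ((⌊1 / a⌋₊ + 1) ^ d : ℕ) ≤ ‖(2 : ℂ) ^ d‖ₑ := by
    rw [← ofReal_norm, ← ofReal_norm, ← ofReal_natCast, ← ofReal_mul (norm_nonneg _)]
    refine ENNReal.ofReal_le_ofReal ?_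
    simpa [abs_of_pos ha] using pow_mul_floor_one_div_add_one_pow_le ha ha1 d
  filter_upwards [ae_tsum_enorm_mul_le g γ ha] with x hx
  calc ‖Ga g γ a x‖ₑ
      ≤ ‖(a : ℂ) ^ d‖ₑ * ‖I⁻¹‖ₑ *
          ∑' k : Fin d → ℤ, ‖g (x - a • zVec k)‖ₑ * ‖γ (x - a • zVec k)‖ₑ := by
        rw [Ga, enorm_mul, div_eq_mul_inv, enorm_mul]
        gcongr
        refine enorm_tsum_le_tsum_enorm.trans_eq (tsum_congr fun k => ?_)
        rw [enorm_mul, RCLike.enorm_conj]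
    _ ≤ ‖(a : ℂ) ^ d‖ₑ * ‖I⁻¹‖ₑ *
          (((⌊1 / a⌋₊ + 1) ^ d : ℕ) * (wienerNorm d g * wienerNorm d γ)) := by gcongr
    _ ≤ ‖(2 : ℂ) ^ d‖ₑ * ‖I⁻¹‖ₑ * (wienerNorm d g * wienerNorm d γ) := by
        rw [mul_right_comm _ ‖I⁻¹‖ₑ, ← mul_assoc, mul_right_comm _ _ ‖I⁻¹‖ₑ]
        gcongr
    _ = _ := by rw [div_eq_mul_inv, enorm_mul]

theorem measurable_Ga {d : ℕ} {g γ : (Fin d → ℝ) → ℂ} (hg : Measurable g) (hγ : Measurable γ)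
    (a : ℝ) : Measurable (Ga g γ a) := by
  unfold Ga
  fun_prop

theorem exists_eventually_ae_enorm_Ga_sub_one_le {d : ℕ} (g γ : (Fin d → ℝ) → ℂ)
    (hWg : wienerNorm d g < ∞) (hWγ : wienerNorm d γ < ∞) :
    ∃ C : ℝ≥0, ∀ᶠ a in 𝓝[>] (0 : ℝ), ∀ᵐ x, ‖Ga g γ a x - 1‖ₑ ≤ C := by
  set M := ‖(2 : ℂ) ^ d / ∫ t, γ t * (starRingEnd ℂ) (g t)‖ₑ *
    (wienerNorm d g * wienerNorm d γ) + 1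
  have hM : M ≠ ∞ := by finiteness
  refine ⟨M.toNNReal, ?_⟩
  filter_upwards [Ioc_mem_nhdsGT zero_lt_one] with a ha
  filter_upwards [ae_enorm_Ga_le g γ ha.1 ha.2] with x hx
  rw [coe_toNNReal hM]
  calc ‖Ga g γ a x - 1‖ₑ ≤ ‖Ga g γ a x‖ₑ + ‖(1 : ℂ)‖ₑ := enorm_sub_le
    _ ≤ M := by rw [enorm_one]; exact add_le_add hx le_rfl

theorem stmt11_general {d : ℕ} (g γ : (Fin d → ℝ) → ℂ) (hg : Measurable g) (hγ : Measurable γ)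
    (hWg : wienerNorm d g < ∞) (hWγ : wienerNorm d γ < ∞)
    (hL2 : ∀ h : (Fin d → ℝ) → ℂ, Measurable h → eLpNorm h 2 volume < ∞ →
      Filter.Tendsto (fun a : ℝ => eLpNorm (fun x => (Ga g γ a x - 1) * h x) 2 volume)
        (nhdsWithin 0 (Set.Ioi 0)) (nhds 0))
    (p : ℝ≥0∞) (hp : 1 ≤ p) (hp' : p ≠ ∞)
    (f : (Fin d → ℝ) → ℂ) (hf : Measurable f) (hfp : eLpNorm f p volume < ∞) :
    Filter.Tendsto (fun a : ℝ => eLpNorm (fun x => (Ga g γ a x - 1) * f x) p volume)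
      (nhdsWithin 0 (Set.Ioi 0)) (nhds 0) := by
  obtain ⟨C, hC⟩ := exists_eventually_ae_enorm_Ga_sub_one_le g γ hWg hWγ
  exact tendsto_eLpNorm_mul_of_tendsto_eLpNorm_two
    (fun a => ((measurable_Ga hg hγ a).sub measurable_const).aestronglyMeasurable) hC hL2 hp hp'
    ⟨hf.aestronglyMeasurable, hfp⟩

/-- transference of the multiplier convergence from `L²` to `L^p`. -/
theorem stmt11 {d : ℕ} (g γ : (Fin d → ℝ) → ℂ) (hg : Measurable g) (hγ : Measurable γ)
    (hWg : wienerNorm d g < ∞) (hWγ : wienerNorm d γ < ∞)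
    (hip : (∫ t, γ t * (starRingEnd ℂ) (g t)) ≠ 0)
    (hL2 : ∀ h : (Fin d → ℝ) → ℂ, Measurable h → eLpNorm h 2 volume < ∞ →
      Filter.Tendsto (fun a : ℝ => eLpNorm (fun x => (Ga g γ a x - 1) * h x) 2 volume)
        (nhdsWithin 0 (Set.Ioi 0)) (nhds 0))
    (p : ℝ≥0∞) (hp : 1 ≤ p) (hp' : p ≠ ∞)
    (f : (Fin d → ℝ) → ℂ) (hf : Measurable f) (hfp : eLpNorm f p volume < ∞) :
    Filter.Tendsto (fun a : ℝ => eLpNorm (fun x => (Ga g γ a x - 1) * f x) p volume)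
      (nhdsWithin 0 (Set.Ioi 0)) (nhds 0) :=
  stmt11_general g γ hg hγ hWg hWγ hL2 p hp hp' f hf hfp
end
end

section
/- Let d = 1 and let E ⊂ [0,1] be a nowhere dense set of positive Lebesgue measure. Let g = γ = χ_E and G_a(x) = (a/‖g‖_2²) ∑_{k∈ℤ} χ_E(x − ak)² (up to normalization, G_a(x) > 0 iff x ∈ ∪_n (na + E)). Then for every a > 0, the set {x ∈ [0,1] : G_a(x) > 0} is nowhere dense, hence |{x ∈ [0,1] : |G_a(x) − 1| = 1}| > 0, and consequently ‖(G_a − 1)χ_{[0,1]}‖_∞ ≥ 1 for all a > 0. -/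
open MeasureTheory ENNReal

noncomputable section

/-- `G_a(x) = (a/‖χ_E‖₂²) ∑_{k∈ℤ} χ_E(x − ak)²` for `g = γ = χ_E` (d = 1). -/
def Ga13 (E : Set ℝ) (a x : ℝ) : ℝ :=
  (a / (volume E).toReal) * ∑' k : ℤ, (Set.indicator E (fun _ => (1:ℝ)) (x - a * k)) ^ 2

lemma nd_mono {X : Type*} [TopologicalSpace X] {s t : Set X} (h : s ⊆ t)
    (ht : IsNowhereDense t) : IsNowhereDense s := by
  rw [IsNowhereDense] at *
  have : interior (closure s) ⊆ interior (closure t) :=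
    interior_mono (closure_mono h)
  rw [ht] at this
  exact Set.eq_empty_of_subset_empty this

lemma nd_union {X : Type*} [TopologicalSpace X] {s t : Set X}
    (hs : IsNowhereDense s) (ht : IsNowhereDense t) : IsNowhereDense (s ∪ t) := by
  rw [IsNowhereDense, closure_union]
  set S := closure s with hS
  set T := closure t with hT
  have hSi : interior S = ∅ := hs
  have hTi : interior T = ∅ := ht
  have h1 : interior (S ∪ T) \ S ⊆ interior T := by
    apply interior_maximal
    · intro x hx
      rcases interior_subset hx.1 with h | h
      · exact absurd h hx.2
      · exact h
    · exact isOpen_interior.sdiff isClosed_closure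
  have h2 : interior (S ∪ T) ⊆ S := by
    intro x hx
    by_contra hxS
    have := h1 ⟨hx, hxS⟩
    rw [hTi] at this
    exact this
  have h3 : interior (S ∪ T) ⊆ interior S :=
    interior_maximal h2 isOpen_interior
  rw [hSi] at h3
  exact Set.eq_empty_of_subset_empty h3

lemma nd_translate {E : Set ℝ} (hE : IsNowhereDense E) (c : ℝ) :
    IsNowhereDense ((fun y => c + y) '' E) := by
  have h : (fun y => c + y) '' E = (Homeomorph.addLeft c) '' E := rfl
  rw [IsNowhereDense, h, ← Homeomorph.image_closure, ← Homeomorph.image_interior,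
    hE, Set.image_empty]

lemma nd_biUnion {X : Type*} [TopologicalSpace X] (F : Finset ℤ) (f : ℤ → Set X)
    (h : ∀ k ∈ F, IsNowhereDense (f k)) : IsNowhereDense (⋃ k ∈ F, f k) := by
  induction F using Finset.induction_on with
  | empty => simp [isNowhereDense_empty]
  | @insert a s hnotmem ih =>
      rw [Finset.set_biUnion_insert]
      exact nd_union (h a (Finset.mem_insert_self a s))
        (ih fun k hk => h k (Finset.mem_insert_of_mem hk))

lemma Ga13_nonneg {E : Set ℝ} {a : ℝ} (ha : 0 < a) (x : ℝ) : 0 ≤ Ga13 E a x := by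
  apply mul_nonneg
  · exact div_nonneg ha.le ENNReal.toReal_nonneg
  · exact tsum_nonneg fun k => sq_nonneg _

lemma Ga13_pos_mem {E : Set ℝ} {a x : ℝ} (h : 0 < Ga13 E a x) :
    ∃ k : ℤ, x - a * k ∈ E := by
  by_contra hc
  push_neg at hc
  have : ∀ k : ℤ, (Set.indicator E (fun _ => (1:ℝ)) (x - a * k)) ^ 2 = 0 := by
    intro k
    rw [Set.indicator_of_notMem (hc k)]
    ring
  have hz : Ga13 E a x = 0 := by
    unfold Ga13
    rw [tsum_congr this, tsum_zero, mul_zero]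
  rw [hz] at h
  exact lt_irrefl 0 h

/-- the counterexample for `p = ∞`. -/
theorem stmt13 (E : Set ℝ) (hE : E ⊆ Set.Icc 0 1) (hEnd : IsNowhereDense E)
    (hEpos : 0 < volume E) :
    ∀ a : ℝ, 0 < a →
      IsNowhereDense {x ∈ Set.Icc (0:ℝ) 1 | 0 < Ga13 E a x} ∧
      0 < volume {x ∈ Set.Icc (0:ℝ) 1 | |Ga13 E a x - 1| = 1} ∧
      1 ≤ eLpNorm (Set.indicator (Set.Icc (0:ℝ) 1) (fun x => Ga13 E a x - 1)) ∞ volume := by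
  intro a ha
  set S := {x ∈ Set.Icc (0:ℝ) 1 | 0 < Ga13 E a x} with hSdef
  -- S is contained in a finite union of translates of E
  have hsub : S ⊆ ⋃ k ∈ Finset.Icc ⌈-(1/a)⌉ ⌊(1/a : ℝ)⌋, (fun y => a * (k : ℝ) + y) '' E := by
    rintro x ⟨hx01, hxpos⟩
    obtain ⟨k, hk⟩ := Ga13_pos_mem hxpos
    have hk01 := hE hk
    have hx0 : (0:ℝ) ≤ x := hx01.1
    have hx1 : x ≤ 1 := hx01.2
    have h1 : a * k ≤ 1 := by nlinarith [hk01.1]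
    have h2 : -1 ≤ a * k := by nlinarith [hk01.2]
    have hkub : (k : ℝ) ≤ 1 / a := by
      rw [le_div_iff₀ ha]; linarith
    have hklb : -(1/a) ≤ (k : ℝ) := by
      rw [neg_le, le_div_iff₀ ha]; nlinarith
    exact Set.mem_biUnion (Finset.mem_Icc.mpr ⟨Int.ceil_le.mpr hklb, Int.le_floor.mpr hkub⟩)
      ⟨x - a * k, hk, by ring⟩
  have hSnd : IsNowhereDense S := by
    refine nd_mono hsub (nd_biUnion _ _ fun k _ => nd_translate hEnd _)
  refine ⟨hSnd, ?_, ?_⟩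
  -- the open set T where Ga13 = 0
  · have hT := hSnd
    rw [IsNowhereDense] at hT
    have hTopen : IsOpen (Set.Ioo (0:ℝ) 1 \ closure S) :=
      isOpen_Ioo.sdiff isClosed_closure
    have hTne : (Set.Ioo (0:ℝ) 1 \ closure S).Nonempty := by
      by_contra hc
      rw [Set.not_nonempty_iff_eq_empty, Set.diff_eq_empty] at hc
      have : Set.Ioo (0:ℝ) 1 ⊆ interior (closure S) :=
        interior_maximal hc isOpen_Ioo
      rw [hT] at this
      exact (Set.nonempty_Ioo.mpr one_pos).ne_empty (Set.eq_empty_of_subset_empty this)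
    have hTpos : 0 < volume (Set.Ioo (0:ℝ) 1 \ closure S) := hTopen.measure_pos volume hTne
    refine lt_of_lt_of_le hTpos (measure_mono ?_)
    rintro x ⟨hx01, hxc⟩
    have hx01' : x ∈ Set.Icc (0:ℝ) 1 := Set.Ioo_subset_Icc_self hx01
    have hxS : x ∉ S := fun h => hxc (subset_closure h)
    have hG0 : Ga13 E a x = 0 := by
      rcases lt_or_eq_of_le (Ga13_nonneg ha x) with h | h
      · exact absurd ⟨hx01', h⟩ hxS
      · exact h.symm
    exact ⟨hx01', by rw [hG0]; norm_num⟩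
  -- eLpNorm bound
  · have hT := hSnd
    rw [IsNowhereDense] at hT
    set T := Set.Ioo (0:ℝ) 1 \ closure S with hTdef
    have hTopen : IsOpen T := isOpen_Ioo.sdiff isClosed_closure
    have hTne : T.Nonempty := by
      by_contra hc
      rw [Set.not_nonempty_iff_eq_empty, Set.diff_eq_empty] at hc
      have : Set.Ioo (0:ℝ) 1 ⊆ interior (closure S) :=
        interior_maximal hc isOpen_Ioo
      rw [hT] at this
      exact (Set.nonempty_Ioo.mpr one_pos).ne_empty (Set.eq_empty_of_subset_empty this)
    have hTpos : 0 < volume T := hTopen.measure_pos volume hTne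
    set f := Set.indicator (Set.Icc (0:ℝ) 1) (fun x => Ga13 E a x - 1) with hfdef
    have hfT : ∀ x ∈ T, (‖f x‖₊ : ℝ≥0∞) = 1 := by
      intro x hx
      have hx01' : x ∈ Set.Icc (0:ℝ) 1 := Set.Ioo_subset_Icc_self hx.1
      have hxS : x ∉ S := fun h => hx.2 (subset_closure h)
      have hG0 : Ga13 E a x = 0 := by
        rcases lt_or_eq_of_le (Ga13_nonneg ha x) with h | h
        · exact absurd ⟨hx01', h⟩ hxS
        · exact h.symm
      have : f x = -1 := by
        rw [hfdef, Set.indicator_of_mem hx01', hG0]; ring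
      rw [this]
      simp
    rw [eLpNorm_exponent_top, eLpNormEssSup]
    have hae := _root_.ae_le_essSup (μ := volume) (f := fun x => (‖f x‖₊ : ℝ≥0∞))
    obtain ⟨x, hxT, hxle⟩ :
        ∃ x ∈ T, (‖f x‖₊ : ℝ≥0∞) ≤ essSup (fun x => (‖f x‖₊ : ℝ≥0∞)) volume := by
      by_contra hc
      push_neg at hc
      have hsub2 : T ⊆ {x | ¬ (‖f x‖₊ : ℝ≥0∞) ≤ essSup (fun x => (‖f x‖₊ : ℝ≥0∞)) volume} :=
        fun x hx => not_le.mpr (hc x hx)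
      have : volume T = 0 := measure_mono_null hsub2 hae
      rw [this] at hTpos
      exact lt_irrefl 0 hTpos
    calc (1 : ℝ≥0∞) = (‖f x‖₊ : ℝ≥0∞) := (hfT x hxT).symm
      _ ≤ _ := hxle
end
end
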